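/- arXiv:2509.17705 — 2 statements merged into one kernel-verified Lean document; each statement's English description precedes it below -/
import Mathlib

section
/- For all nonnegative integers t, α and all n ≥ 0, the number of overpartition t-tuples satisfies p̄_t(2^{2α+3}·n + 5·2^{2α}) ≡ 0 (mod 4). -/
/-- The number of overpartitions of `n`: a partition of `n` together with a
choice of which distinct part values are overlined (the first occurrence of a
part value may be overlined), so that the count is `∑_{λ ⊢ n} 2^{#distinct parts of λ}`. -/
def overpartitionCount (n : ℕ) : ℕ :=
  ∑ p : n.Partition, 2 ^ p.parts.toFinset.card

/-- The number of overpartition `t`-tuples of `n`: `t`-tuples of overpartitions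
whose sizes sum to `n`. -/
def overpartitionTuples (t n : ℕ) : ℕ :=
  ∑ c ∈ Finset.Nat.antidiagonalTuple t n, ∏ i, overpartitionCount (c i)

open Finset

lemma oc_zero : overpartitionCount 0 = 1 := by
  simp [overpartitionCount]

lemma two_dvd_oc {m : ℕ} (hm : m ≠ 0) : 2 ∣ overpartitionCount m := by
  apply Finset.dvd_sum
  intro p _
  have h0 : p.parts ≠ 0 := fun h => hm (by rw [← p.parts_sum, h]; simp)
  have h1 : p.parts.toFinset ≠ ∅ := by
    simpa [Multiset.toFinset_eq_empty] using h0
  have : 1 ≤ p.parts.toFinset.card := Nat.one_le_iff_ne_zero.2 (by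
    simpa [Finset.card_eq_zero] using h1)
  exact dvd_trans (by norm_num) (pow_dvd_pow 2 this)

/-- Partitions of `m` with exactly one distinct part value are counted by divisors. -/
lemma card_one_part_partitions {m : ℕ} (hm : m ≠ 0) :
    #(Finset.univ.filter fun p : m.Partition => p.parts.toFinset.card = 1)
      = #m.divisors := by
  classical
  symm
  apply Finset.card_bij (fun k hk =>
    (⟨Multiset.replicate (m / k) k,
      fun hi => by
        rw [Multiset.eq_of_mem_replicate hi]
        exact Nat.pos_of_mem_divisors hk,
      by
        rw [Multiset.sum_replicate, smul_eq_mul]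
        exact Nat.div_mul_cancel (Nat.mem_divisors.1 hk).1⟩ : m.Partition))
  · intro k hk
    have hkd := Nat.mem_divisors.1 hk
    have hdiv : m / k ≠ 0 := by
      have := Nat.div_pos (Nat.le_of_dvd (Nat.pos_of_ne_zero hm) hkd.1)
        (Nat.pos_of_mem_divisors hk)
      omega
    simp [hdiv]
  · intro k₁ hk₁ k₂ hk₂ h
    have h' := congrArg (fun p : m.Partition => p.parts) h
    simp only at h'
    have hdiv : m / k₁ ≠ 0 := by
      have := Nat.div_pos (Nat.le_of_dvd (Nat.pos_of_ne_zero hm)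
        (Nat.mem_divisors.1 hk₁).1) (Nat.pos_of_mem_divisors hk₁)
      omega
    have : k₁ ∈ Multiset.replicate (m / k₂) k₂ := by
      rw [← h']
      exact Multiset.mem_replicate.2 ⟨hdiv, rfl⟩
    exact (Multiset.eq_of_mem_replicate this)
  · intro p hp
    have hcard := (Finset.mem_filter.1 hp).2
    obtain ⟨k, hk⟩ := Finset.card_eq_one.1 hcard
    have hkpos : 0 < k := by
      apply p.parts_pos
      have : k ∈ p.parts.toFinset := hk ▸ Finset.mem_singleton_self k
      exact Multiset.mem_toFinset.1 this
    have hrep : p.parts = Multiset.replicate p.parts.card k := by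
      rw [Multiset.eq_replicate]
      refine ⟨rfl, fun b hb => ?_⟩
      have : b ∈ p.parts.toFinset := Multiset.mem_toFinset.2 hb
      rw [hk] at this
      exact Finset.mem_singleton.1 this
    have hsum : p.parts.card * k = m := by
      have := p.parts_sum
      rw [hrep] at this ⊢
      simpa [Multiset.sum_replicate, smul_eq_mul] using this
    have hkdvd : k ∣ m := Dvd.intro_left _ hsum
    refine ⟨k, Nat.mem_divisors.2 ⟨hkdvd, hm⟩, ?_⟩
    ext1
    simp only
    rw [hrep]
    congr 1
    exact Nat.div_eq_of_eq_mul_left hkpos hsum.symm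

lemma even_card_divisors {N : ℕ} (h0 : N ≠ 0) (h : ¬ IsSquare N) :
    Even #N.divisors := by
  rw [Nat.card_divisors h0]
  by_contra hodd
  rw [Nat.not_even_iff_odd] at hodd
  apply h
  have heven : ∀ p ∈ N.primeFactors, N.factorization p = 2 * (N.factorization p / 2) := by
    intro p hp
    have hdvd : (N.factorization p + 1) ∣ N.primeFactors.prod (N.factorization · + 1) :=
      Finset.dvd_prod_of_mem _ hp
    have := hodd.of_dvd_nat hdvd
    obtain ⟨j, hj⟩ := this
    omega
  refine ⟨∏ p ∈ N.primeFactors, p ^ (N.factorization p / 2), ?_⟩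
  conv_lhs => rw [← Nat.factorization_prod_pow_eq_self h0]
  rw [Finsupp.prod, Nat.support_factorization, ← Finset.prod_mul_distrib]
  apply Finset.prod_congr rfl
  intro p hp
  rw [← pow_add]
  congr 1
  have := heven p hp
  omega

lemma not_isSquare_eight_mul_add_five (n : ℕ) : ¬ IsSquare (8 * n + 5) := by
  rintro ⟨s, hs⟩
  have h8 : s % 8 < 8 := Nat.mod_lt _ (by norm_num)
  have hmod : (8 * n + 5) % 8 = (s % 8) * (s % 8) % 8 := by
    rw [hs, Nat.mul_mod]
  interval_cases h : s % 8 <;> omega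

lemma four_dvd_oc {m : ℕ} (hm : m ≠ 0) (hd : Even #m.divisors) :
    4 ∣ overpartitionCount m := by
  classical
  rw [overpartitionCount,
    ← Finset.sum_filter_add_sum_filter_not Finset.univ
      (fun p : m.Partition => p.parts.toFinset.card = 1)]
  apply dvd_add
  · rw [Finset.sum_congr rfl (fun p hp => by
      rw [(Finset.mem_filter.1 hp).2, pow_one]), Finset.sum_const, smul_eq_mul,
      card_one_part_partitions hm]
    obtain ⟨j, hj⟩ := hd
    rw [hj]
    ring_nf
    omega
  · apply Finset.dvd_sum
    intro p hp
    have hne := (Finset.mem_filter.1 hp).2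
    have h0 : p.parts ≠ 0 := fun h => hm (by rw [← p.parts_sum, h]; simp)
    have h1 : p.parts.toFinset ≠ ∅ := by
      simpa [Multiset.toFinset_eq_empty] using h0
    have hpos : 1 ≤ p.parts.toFinset.card := Nat.one_le_iff_ne_zero.2 (by
      simpa [Finset.card_eq_zero] using h1)
    have h2 : 2 ≤ p.parts.toFinset.card := by
      rcases Nat.lt_or_ge p.parts.toFinset.card 2 with h | h
      · exfalso; apply hne; omega
      · exact h
    exact dvd_trans (by norm_num) (pow_dvd_pow 2 h2)

theorem overpartitionTuples_five_pow_two_mod_four (t α n : ℕ) :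
    overpartitionTuples t (2 ^ (2 * α + 3) * n + 5 * 2 ^ (2 * α)) ≡ 0 [MOD 4] := by
  set N : ℕ := 2 ^ (2 * α + 3) * n + 5 * 2 ^ (2 * α) with hNdef
  have hNfac : N = 2 ^ (2 * α) * (8 * n + 5) := by
    rw [hNdef, pow_add]
    ring
  have hNpos : N ≠ 0 := by positivity
  have hcop : (2 ^ (2 * α)).Coprime (8 * n + 5) :=
    Nat.Coprime.pow_left _ (Nat.coprime_two_left.2 ⟨4 * n + 2, by ring⟩)
  have hde : Even #N.divisors := by
    rw [hNfac, hcop.card_divisors_mul]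
    exact (even_card_divisors (by omega) (not_isSquare_eight_mul_add_five n)).mul_left _
  have hoc : 4 ∣ overpartitionCount N := four_dvd_oc hNpos hde
  have hdvd : 4 ∣ overpartitionTuples t N := by
    apply Finset.dvd_sum
    intro c hc
    have hsum : ∑ i, c i = N := Finset.Nat.mem_antidiagonalTuple.1 hc
    have hex : ∃ i, c i ≠ 0 := by
      by_contra hall
      push_neg at hall
      apply hNpos
      rw [← hsum]
      exact Finset.sum_eq_zero fun i _ => hall i
    obtain ⟨i, hi⟩ := hex
    by_cases hj : ∃ j, j ≠ i ∧ c j ≠ 0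
    · obtain ⟨j, hji, hj0⟩ := hj
      have hprod : ∏ k, overpartitionCount (c k)
          = overpartitionCount (c i) *
            (overpartitionCount (c j) * ∏ k ∈ (Finset.univ.erase i).erase j,
              overpartitionCount (c k)) := by
        rw [← Finset.mul_prod_erase _ _ (Finset.mem_univ i),
          ← Finset.mul_prod_erase _ _ (Finset.mem_erase.2 ⟨hji, Finset.mem_univ j⟩)]
      rw [hprod, ← mul_assoc]
      exact Dvd.dvd.mul_right
        (mul_dvd_mul (two_dvd_oc hi) (two_dvd_oc hj0)) _
    · push_neg at hj
      have hci : c i = N := by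
        rw [← hsum]
        exact (Finset.sum_eq_single_of_mem i (Finset.mem_univ i)
          (fun j _ hji => hj j hji)).symm
      have hprod : ∏ k, overpartitionCount (c k) = overpartitionCount N := by
        rw [Finset.mul_prod_erase _ _ (Finset.mem_univ i) |>.symm, hci]
        have : ∏ k ∈ Finset.univ.erase i, overpartitionCount (c k) = 1 := by
          apply Finset.prod_eq_one
          intro j hjmem
          rw [hj j (Finset.mem_erase.1 hjmem).1, oc_zero]
        rw [this, mul_one]
      rw [hprod]
      exact hoc
  simpa [Nat.modEq_zero_iff_dvd] using hdvd
end

section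
/- For all nonnegative integers t and all n ≥ 0, the number of overpartition t-tuples satisfies p̄_t(8n+6) ≡ 0 (mod 8). -/
/-!
Since `2^k ≡ 0 (mod 8)` for `k ≥ 3`, only partitions with at most two distinct part values
contribute to `p̄(n) = ∑_λ 2^{#distinct parts of λ}` modulo 8, so `p̄(n) ≡ [n = 0] + 2 c(n)` with
`c(n) = d(n) + 2 E(n)`, where `d(n)` is the number of divisors of `n` (partitions into equal
parts) and `E(n)` the number of partitions with exactly two distinct part values. The generating
function is therefore `1 + 2C` modulo 8, and `(1 + 2C)^t ≡ 1 + 2tC + 4 (t choose 2) C²`.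

For `N ≡ 6 (mod 8)` both terms vanish at `N`. First `4 ∣ c(N)`: `d(N) = 2 d(N/2)` where
`N/2 ≡ 3 (mod 4)` is not a square, so `d(N/2)` is even, and `E(N)` is even because conjugation is a
fixed-point-free involution on the partitions it counts. Second, the coefficient of `C²` at `N` is
`∑_{a+b=N} c(a) c(b)`, which is even by the symmetry `a ↔ b`, the middle term `c(N/2)²` being even.
-/

open Finset PowerSeries

namespace Finset

variable {ι : Type*} {s : Finset ι}

theorem even_sum_of_involution {f : ι → ℕ} (g : ι → ι) (hg_mem : ∀ a ∈ s, g a ∈ s)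
    (hg_inv : ∀ a ∈ s, g (g a) = a) (hfg : ∀ a ∈ s, f (g a) = f a)
    (hfix : ∀ a ∈ s, g a = a → Even (f a)) : Even (∑ a ∈ s, f a) := by
  rw [even_iff_two_dvd, ← ZMod.natCast_eq_zero_iff, Nat.cast_sum]
  refine sum_involution (fun a _ => g a) (fun a ha => ?_) (fun a ha hfa hga => ?_) hg_mem hg_inv
  · rw [hfg a ha, ← two_mul]
    exact mul_eq_zero_of_left (by decide) _
  · rw [Ne, ZMod.natCast_eq_zero_iff, ← even_iff_two_dvd] at hfa
    exact hfa (hfix a ha hga)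

theorem even_card_of_involution (g : ι → ι) (hg_mem : ∀ a ∈ s, g a ∈ s)
    (hg_inv : ∀ a ∈ s, g (g a) = a) (hg_ne : ∀ a ∈ s, g a ≠ a) : Even #s := by
  rw [card_eq_sum_ones]
  exact even_sum_of_involution g hg_mem hg_inv (fun _ _ => rfl)
    (fun a ha hga => absurd hga (hg_ne a ha))

end Finset

theorem Nat.even_card_divisors_of_not_isSquare {m : ℕ} (hm : ¬IsSquare m) :
    Even #m.divisors := by
  refine even_card_of_involution (m / ·) (fun d hd => ?_) (fun d hd => ?_) (fun d hd hd' => ?_) <;>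
    obtain ⟨hdvd, hm0⟩ := Nat.mem_divisors.1 hd
  · exact Nat.mem_divisors.2 ⟨Nat.div_dvd_of_dvd hdvd, hm0⟩
  · exact Nat.div_div_self hdvd hm0
  · exact hm ⟨d, (Nat.div_mul_cancel hdvd).symm.trans (by rw [hd'])⟩

theorem Nat.not_isSquare_of_mod_four_eq_three {m : ℕ} (hm : m % 4 = 3) : ¬IsSquare m := by
  rintro ⟨r, rfl⟩
  rcases Nat.even_or_odd' r with ⟨k, rfl | rfl⟩ <;> ring_nf at hm <;> omega

theorem Nat.four_dvd_card_divisors_of_mod_eight_eq_six {N : ℕ} (hN : N % 8 = 6) :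
    4 ∣ #N.divisors := by
  obtain ⟨k, hk⟩ := Nat.even_card_divisors_of_not_isSquare
    (Nat.not_isSquare_of_mod_four_eq_three (m := N / 2) (by omega))
  have hcop : Nat.Coprime 2 (N / 2) := Nat.coprime_two_left.2 (Nat.odd_iff.2 (by omega))
  rw [show N = 2 * (N / 2) by omega, Nat.Coprime.card_divisors_mul hcop, hk]
  rw [Nat.prime_two.divisors, card_pair (by decide)]
  omega

theorem even_sum_antidiagonal_mul_self {f : ℕ → ℕ} {N : ℕ} (hf : ∀ a, a + a = N → Even (f a)) :
    Even (∑ p ∈ antidiagonal N, f p.1 * f p.2) := by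
  refine even_sum_of_involution Prod.swap (fun p hp => ?_) (fun p _ => rfl)
    (fun p _ => mul_comm _ _) (fun p hp hswap => ?_)
  · simpa [add_comm] using hp
  · obtain ⟨a, b⟩ := p
    obtain rfl : b = a := congrArg Prod.fst hswap
    exact (hf b (mem_antidiagonal.1 hp)).mul_right _

theorem Multiset.eq_replicate_add_replicate_of_toFinset_eq_pair {α : Type*} [DecidableEq α]
    {s : Multiset α} {x y : α} (hxy : x ≠ y) (hs : s.toFinset = {x, y}) :
    s = replicate (s.count x) x + replicate (s.count y) y := by
  conv_lhs => rw [← toFinset_sum_count_nsmul_eq s, hs, Finset.sum_pair hxy]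
  rw [nsmul_singleton, nsmul_singleton]

theorem card_partitions_card_parts_toFinset_eq_zero (n : ℕ) :
    #{p : n.Partition | #p.parts.toFinset = 0} = if n = 0 then 1 else 0 := by
  split_ifs with hn
  · subst hn
    rw [filter_true_of_mem fun p _ => by simp, card_univ, Fintype.card_unique]
  · rw [filter_false_of_mem fun p _ hp => hn ?_, card_empty]
    rw [Finset.card_eq_zero, Multiset.toFinset_eq_empty] at hp
    rw [← p.parts_sum, hp, Multiset.sum_zero]

theorem card_partitions_card_parts_toFinset_eq_one (n : ℕ) :
    #{p : n.Partition | #p.parts.toFinset = 1} = #n.divisors := by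
  symm
  refine card_bij (fun d hd => ⟨.replicate (n / d) d,
      fun hi => Multiset.eq_of_mem_replicate hi ▸ Nat.pos_of_mem_divisors hd,
      by rw [Multiset.sum_replicate, smul_eq_mul, Nat.div_mul_cancel (Nat.dvd_of_mem_divisors hd)]⟩)
    (fun d hd => ?_) (fun d hd d' hd' h => ?_) (fun p hp => ?_)
  · have hd0 : n / d ≠ 0 := (Nat.div_pos (Nat.divisor_le hd) (Nat.pos_of_mem_divisors hd)).ne'
    simp [hd0]
  · have hd0 : n / d ≠ 0 := (Nat.div_pos (Nat.divisor_le hd) (Nat.pos_of_mem_divisors hd)).ne'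
    simp only [Nat.Partition.mk.injEq] at h
    exact Multiset.eq_of_mem_replicate (h ▸ Multiset.mem_replicate.2 ⟨hd0, rfl⟩)
  · obtain ⟨d, hd⟩ := Finset.card_eq_one.1 (mem_filter.1 hp).2
    have hrep : p.parts = .replicate (Multiset.card p.parts) d :=
      Multiset.eq_replicate_card.2 fun b hb => by simpa [hd] using Multiset.mem_toFinset.2 hb
    have hn : Multiset.card p.parts * d = n := by
      conv_rhs => rw [← p.parts_sum, hrep, Multiset.sum_replicate, smul_eq_mul]
    have hdp : d ∈ p.parts := Multiset.mem_toFinset.1 (hd ▸ mem_singleton_self d)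
    have hd0 : 0 < d := p.parts_pos hdp
    have hn0 : n ≠ 0 := hn ▸ (Nat.mul_pos (Multiset.card_pos_iff_exists_mem.2 ⟨d, hdp⟩) hd0).ne'
    refine ⟨d, Nat.mem_divisors.2 ⟨⟨_, hn.symm.trans (mul_comm _ _)⟩, hn0⟩, ?_⟩
    ext1
    change Multiset.replicate (n / d) d = p.parts
    rw [show n / d = Multiset.card p.parts from
      Nat.div_eq_of_eq_mul_left hd0 hn.symm, ← hrep]

/-- `(m, l, a, b)` encodes the partition with `a` parts equal to `m` and `b` parts equal to `l`. -/
def twoValueShapes (n : ℕ) : Finset (ℕ × ℕ × ℕ × ℕ) :=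
  (range (n + 1) ×ˢ range (n + 1) ×ˢ range (n + 1) ×ˢ range (n + 1)).filter
    fun (m, l, a, b) => 0 < l ∧ l < m ∧ 0 < a ∧ 0 < b ∧ a * m + b * l = n

theorem mem_twoValueShapes {n m l a b : ℕ} :
    (m, l, a, b) ∈ twoValueShapes n ↔ 0 < l ∧ l < m ∧ 0 < a ∧ 0 < b ∧ a * m + b * l = n := by
  simp only [twoValueShapes, mem_filter, mem_product, mem_range, and_iff_right_iff_imp]
  rintro ⟨hl, hlm, ha, hb, rfl⟩
  refine ⟨?_, ?_, ?_, ?_⟩ <;> nlinarith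

/-- The involution is conjugation of partitions; a self-conjugate shape has `n = l (l + 2 b)`. -/
theorem even_card_twoValueShapes {n : ℕ} (hn : n % 4 = 2) : Even #(twoValueShapes n) := by
  refine even_card_of_involution (fun (m, l, a, b) => (a + b, a, l, m - l))
    (fun ⟨m, l, a, b⟩ hx => ?_) (fun ⟨m, l, a, b⟩ hx => ?_) (fun ⟨m, l, a, b⟩ hx hfix => ?_)
    <;> obtain ⟨hl, hlm, ha, hb, rfl⟩ := mem_twoValueShapes.1 hx
  · obtain ⟨d, rfl⟩ := Nat.exists_eq_add_of_lt hlm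
    refine mem_twoValueShapes.2 ⟨ha, by omega, hl, by omega, ?_⟩
    rw [show l + d + 1 - l = d + 1 by omega]
    ring
  · grind
  · simp only [Prod.mk.injEq] at hfix
    obtain ⟨rfl, rfl, -, -⟩ := hfix
    rcases Nat.even_or_odd' a with ⟨k, rfl | rfl⟩ <;> ring_nf at hn <;> omega

def twoValuePartition {n : ℕ} (x : ℕ × ℕ × ℕ × ℕ) (hx : x ∈ twoValueShapes n) : n.Partition where
  parts := .replicate x.2.2.1 x.1 + .replicate x.2.2.2 x.2.1
  parts_pos hi := by
    obtain ⟨hl, hlm, -⟩ := mem_twoValueShapes.1 hx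
    rcases Multiset.mem_add.1 hi with hi | hi <;> rw [Multiset.eq_of_mem_replicate hi] <;> omega
  parts_sum := by
    rw [Multiset.sum_add, Multiset.sum_replicate, Multiset.sum_replicate, smul_eq_mul, smul_eq_mul]
    exact (mem_twoValueShapes.1 hx).2.2.2.2

theorem card_partitions_card_parts_toFinset_eq_two (n : ℕ) :
    #{p : n.Partition | #p.parts.toFinset = 2} = #(twoValueShapes n) := by
  symm
  refine card_bij twoValuePartition (fun ⟨m, l, a, b⟩ hx => ?_)
    (fun ⟨m, l, a, b⟩ hx ⟨m', l', a', b'⟩ hx' h => ?_) (fun p hp => ?_)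
  · obtain ⟨hl, hlm, ha, hb, -⟩ := mem_twoValueShapes.1 hx
    simp only [twoValuePartition, mem_filter, mem_univ, true_and, Multiset.toFinset_add,
      Multiset.toFinset_replicate, if_neg ha.ne', if_neg hb.ne']
    exact card_pair (by omega)
  · obtain ⟨hl, hlm, ha, hb, -⟩ := mem_twoValueShapes.1 hx
    obtain ⟨hl', hlm', ha', hb', -⟩ := mem_twoValueShapes.1 hx'
    have hparts := congrArg Nat.Partition.parts h
    simp only [twoValuePartition] at hparts
    have mem_m := congrArg (m ∈ ·) hparts
    have mem_l := congrArg (l ∈ ·) hparts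
    have mem_m' := congrArg (m' ∈ ·) hparts
    have mem_l' := congrArg (l' ∈ ·) hparts
    simp [Multiset.mem_replicate, ha.ne', hb.ne', ha'.ne', hb'.ne'] at mem_m mem_l mem_m' mem_l'
    obtain ⟨rfl, rfl⟩ : m = m' ∧ l = l' := by omega
    have ca := congrArg (Multiset.count m) hparts
    have cb := congrArg (Multiset.count l) hparts
    simp [Multiset.count_replicate, hlm.ne, hlm.ne'] at ca cb
    rw [ca, cb]
  · obtain ⟨m, l, hlm, hs⟩ : ∃ m l, l < m ∧ p.parts.toFinset = {m, l} := by
      obtain ⟨x, y, hxy, hs⟩ := card_eq_two.1 (mem_filter.1 hp).2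
      rcases hxy.lt_or_gt with h | h
      · exact ⟨y, x, h, hs.trans (pair_comm x y)⟩
      · exact ⟨x, y, h, hs⟩
    have hdecomp := Multiset.eq_replicate_add_replicate_of_toFinset_eq_pair hlm.ne' hs
    have hm : m ∈ p.parts := Multiset.mem_toFinset.1 (hs ▸ mem_insert_self m {l})
    have hl : l ∈ p.parts := Multiset.mem_toFinset.1 (hs ▸ mem_insert_of_mem (mem_singleton_self l))
    have hsum : p.parts.count m * m + p.parts.count l * l = n := by
      conv_rhs => rw [← p.parts_sum, hdecomp]
      simp
    refine ⟨(m, l, p.parts.count m, p.parts.count l), mem_twoValueShapes.2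
      ⟨p.parts_pos hl, hlm, Multiset.count_pos.2 hm, Multiset.count_pos.2 hl, hsum⟩, ?_⟩
    ext1
    exact hdecomp.symm

theorem two_pow_zmod_eight (k : ℕ) : (2 : ZMod 8) ^ k =
    (if k = 0 then 1 else 0) + (if k = 1 then 2 else 0) + (if k = 2 then 4 else 0) := by
  match k with
  | 0 | 1 | 2 => rfl
  | k + 3 => simp [pow_add, show (2 : ZMod 8) ^ 3 = 0 from rfl]

theorem overpartitionCount_cast_zmod_eight (n : ℕ) :
    (overpartitionCount n : ZMod 8) =
      (if n = 0 then 1 else 0) + 2 * ((#n.divisors + 2 * #(twoValueShapes n) : ℕ) : ZMod 8) := by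
  simp only [overpartitionCount, Nat.cast_sum, Nat.cast_pow, Nat.cast_ofNat, two_pow_zmod_eight,
    sum_add_distrib, ← sum_filter, sum_const, nsmul_eq_mul,
    card_partitions_card_parts_toFinset_eq_zero, card_partitions_card_parts_toFinset_eq_one,
    card_partitions_card_parts_toFinset_eq_two]
  split_ifs <;> push_cast <;> ring

def overpartitionSeries (R : Type*) [CommSemiring R] : R⟦X⟧ :=
  mk fun n => (overpartitionCount n : R)

theorem coeff_overpartitionSeries_pow (R : Type*) [CommSemiring R] (t N : ℕ) :
    coeff N (overpartitionSeries R ^ t) = overpartitionTuples t N := by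
  rw [overpartitionTuples, Nat.cast_sum, ← Fin.prod_const, coeff_prod]
  refine sum_bij' (fun l _ => ⇑l) (fun c _ => Finsupp.equivFunOnFinite.symm c)
    (fun l hl => ?_) (fun c hc => ?_) (fun l _ => by simp) (fun _ _ => rfl) (fun l _ => ?_)
  · simpa [mem_finsuppAntidiag, Nat.mem_antidiagonalTuple] using hl
  · simpa [mem_finsuppAntidiag, Nat.mem_antidiagonalTuple] using hc
  · simp [overpartitionSeries]

theorem overpartitionSeries_zmod_eight : overpartitionSeries (ZMod 8) =
    1 + 2 * mk fun n => ((#n.divisors + 2 * #(twoValueShapes n) : ℕ) : ZMod 8) := by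
  ext n
  rw [overpartitionSeries, coeff_mk, overpartitionCount_cast_zmod_eight, map_add, coeff_one,
    ← map_ofNat C 2, coeff_C_mul, coeff_mk]

theorem one_add_two_mul_pow {R : Type*} [CommRing R] (h8 : (8 : R) = 0) (c : R) (t : ℕ) :
    (1 + 2 * c) ^ t = 1 + 2 * t * c + 4 * t.choose 2 * c ^ 2 := by
  induction t with
  | zero => simp
  | succ t ih =>
    rw [pow_succ, ih, Nat.choose_succ_succ', Nat.choose_one_right]
    push_cast
    linear_combination (t.choose 2 * c ^ 3 : R) * h8

theorem coeff_one_add_two_mul_pow_eq_zero {f : ℕ → ℕ} {N : ℕ} (hN : N ≠ 0) (h4 : 4 ∣ f N)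
    (h2 : ∀ a, a + a = N → Even (f a)) (t : ℕ) :
    coeff N ((1 + 2 * mk fun n => (f n : ZMod 8)) ^ t) = 0 := by
  obtain ⟨k, hk⟩ := h4
  obtain ⟨j, hj⟩ := even_sum_antidiagonal_mul_self h2
  have hsq : coeff N ((mk fun n => (f n : ZMod 8)) ^ 2) = ((j + j : ℕ) : ZMod 8) := by
    rw [pow_two, coeff_mul, ← hj]
    push_cast
    simp only [coeff_mk]
  have h8 : (8 : ZMod 8) = 0 := rfl
  rw [one_add_two_mul_pow (by rw [← map_ofNat C 8, h8, map_zero]), map_add, map_add, coeff_one,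
    if_neg hN, ← map_natCast C, ← map_natCast C, ← map_ofNat C 2, ← map_ofNat C 4, ← map_mul,
    ← map_mul, coeff_C_mul, coeff_C_mul, hsq, coeff_mk, hk]
  push_cast
  linear_combination (t * k + t.choose 2 * j : ZMod 8) * h8

theorem overpartitionTuples_eight_n_six_mod_eight (t n : ℕ) :
    overpartitionTuples t (8 * n + 6) ≡ 0 [MOD 8] := by
  rw [Nat.modEq_zero_iff_dvd, ← ZMod.natCast_eq_zero_iff, ← coeff_overpartitionSeries_pow,
    overpartitionSeries_zmod_eight]
  refine coeff_one_add_two_mul_pow_eq_zero (by omega) ?_ (fun a ha => ?_) t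
  · obtain ⟨k, hk⟩ := even_card_twoValueShapes (n := 8 * n + 6) (by omega)
    rw [hk, ← two_mul, ← mul_assoc]
    exact dvd_add (Nat.four_dvd_card_divisors_of_mod_eight_eq_six (by omega)) (dvd_mul_right 4 k)
  · exact (Nat.even_card_divisors_of_not_isSquare
      (Nat.not_isSquare_of_mod_four_eq_three (by omega))).add (even_two_mul _)
end
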